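/- Let N+ be a rooted binary phylogenetic network on taxon set X with |X| ≥ 4, and let {a,b,c,d} ⊆ X be a T-quartet on N+ whose associated resolved quartet is ab|cd. Then {a,b,c,d} is also a T-quartet on the induced 4-taxon network N+_{a,b,c,d}, with the same associated resolved quartet ab|cd. -/

import Mathlib

/-!
# Common framework

Finite directed multigraphs, undirected connectivity, numbers of connected
components, cut edges, subgraphs, blobs, blobs determined by leaf sets,
B-quartets, and quartets displayed via cut-edge separation.

A *network* is modelled as a finite directed multigraph (edge directions are
simply ignored for the undirected notions of connectivity, cut edges and
blobs).
-/

/-- A finite directed multigraph: finite types of nodes and of edges, with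
source and target maps. -/
structure MDigraph where
  V : Type
  E : Type
  finV : Finite V
  finE : Finite E
  src : E → V
  tgt : E → V

attribute [instance] MDigraph.finV MDigraph.finE

namespace MDigraph

section Basic

variable (G : MDigraph)

/-- One undirected step between `u` and `v` along an edge from the set `F`. -/
def Step (F : Set G.E) (u v : G.V) : Prop :=
  ∃ e ∈ F, (G.src e = u ∧ G.tgt e = v) ∨ (G.src e = v ∧ G.tgt e = u)

/-- Undirected reachability (an undirected path) using only edges in `F`. -/
def Conn (F : Set G.E) (u v : G.V) : Prop :=
  Relation.ReflTransGen (G.Step F) u v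

/-- One directed step from `u` to `v` along an edge from the set `F`. -/
def DStep (F : Set G.E) (u v : G.V) : Prop :=
  ∃ e ∈ F, G.src e = u ∧ G.tgt e = v

/-- Directed reachability (a directed path) using only edges in `F`. -/
def DConn (F : Set G.E) (u v : G.V) : Prop :=
  Relation.ReflTransGen (G.DStep F) u v

/-- `u` is above (ancestral to) `v`: there is a directed path from `u` to `v`. -/
def Above (u v : G.V) : Prop := G.DConn Set.univ u v

/-- In-degree of a node. -/
noncomputable def inDeg (v : G.V) : ℕ := Nat.card {e : G.E // G.tgt e = v}

/-- Out-degree of a node. -/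
noncomputable def outDeg (v : G.V) : ℕ := Nat.card {e : G.E // G.src e = v}

/-- Undirected degree of a node (a loop counts twice). -/
noncomputable def degree (v : G.V) : ℕ := G.inDeg v + G.outDeg v

/-- The number of connected components of the graph with node set `W` and edge
set the restriction to `W` of `F` (two nodes of `W` lie in the same connected
component iff they are joined by an undirected path). -/
noncomputable def numComponents (W : Set G.V) (F : Set G.E) : ℕ :=
  Nat.card (Quot (fun u v : W => G.Step {e ∈ F | G.src e ∈ W ∧ G.tgt e ∈ W} u.1 v.1))

/-- `v` lies on every directed path from `u` to `w`: there is no directed path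
from `u` to `w` all of whose nodes avoid `v`. -/
def OnEveryPath (v u w : G.V) : Prop :=
  ¬ (u ≠ v ∧ w ≠ v ∧
      Relation.ReflTransGen (fun a b => G.DStep Set.univ a b ∧ a ≠ v ∧ b ≠ v) u w)

end Basic

/-- A subgraph (subnetwork): a set of nodes together with a set of edges
joining them. -/
structure Subgraph (G : MDigraph) where
  verts : Set G.V
  edges : Set G.E
  src_mem : ∀ e ∈ edges, G.src e ∈ verts
  tgt_mem : ∀ e ∈ edges, G.tgt e ∈ verts

/-- The whole graph, as a subgraph of itself. -/
def top (G : MDigraph) : Subgraph G :=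
  ⟨Set.univ, Set.univ, fun _ _ => Set.mem_univ _, fun _ _ => Set.mem_univ _⟩

namespace Subgraph

variable {G : MDigraph}

/-- Containment of subgraphs. -/
def le (H K : Subgraph G) : Prop := H.verts ⊆ K.verts ∧ H.edges ⊆ K.edges

/-- The subgraph `H` is connected. -/
def IsConnected (H : Subgraph G) : Prop :=
  H.verts.Nonempty ∧ ∀ u ∈ H.verts, ∀ v ∈ H.verts, G.Conn H.edges u v

/-- Delete an edge from a subgraph. -/
def deleteEdge (H : Subgraph G) (e : G.E) : Subgraph G :=
  ⟨H.verts, H.edges \ {e}, fun e' he' => H.src_mem e' he'.1,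
    fun e' he' => H.tgt_mem e' he'.1⟩

/-- The number of connected components of a subgraph. -/
noncomputable def numComponents (H : Subgraph G) : ℕ :=
  G.numComponents H.verts H.edges

/-- `e` is a cut edge of the (sub)graph `H`: deleting it increases the number
of connected components. -/
def IsCutEdge (H : Subgraph G) (e : G.E) : Prop :=
  e ∈ H.edges ∧ H.numComponents < (H.deleteEdge e).numComponents

end Subgraph

variable {G : MDigraph}

/-- `B` is a blob of the network `H`: a maximal connected subnetwork of `H`
having no cut edges.  (A blob is *trivial* if it consists of a single node.) -/
def IsBlobIn (H B : Subgraph G) : Prop :=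
  B.le H ∧ B.IsConnected ∧ (∀ e, ¬ B.IsCutEdge e) ∧
    ∀ B' : Subgraph G, B'.le H → B'.IsConnected → (∀ e, ¬ B'.IsCutEdge e) →
      B.le B' → B'.le B

/-- `e` is a cut edge of the network `H` incident to the blob `B`: exactly one
of its endpoints is a node of `B`. -/
def IncidentCut (H B : Subgraph G) (e : G.E) : Prop :=
  H.IsCutEdge e ∧ Xor' (G.src e ∈ B.verts) (G.tgt e ∈ B.verts)

/-- The blob `B` of the network `H` is determined by the set `S` of leaf
labels: deletion of the cut edges of `H` incident to `B` leaves the nodes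
labelled by the elements of `S` in distinct connected components. -/
def DeterminesIn {X : Type} (H B : Subgraph G) (leaf : X → G.V) (S : Set X) : Prop :=
  ∀ s ∈ S, ∀ t ∈ S, s ≠ t →
    ¬ G.Conn {e ∈ H.edges | ¬ IncidentCut H B e} (leaf s) (leaf t)

/-- Four taxa form a B-quartet on the network `H`: some blob of `H` is
determined by them. -/
def BQuartetIn {X : Type} (H : Subgraph G) (leaf : X → G.V) (a b c d : X) : Prop :=
  ∃ B : Subgraph G, IsBlobIn H B ∧ DeterminesIn H B leaf ({a, b, c, d} : Set X)

/-- Some cut edge of `H` separates the taxa `p, q` from the taxa `r, s`: after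
its deletion `p, q` lie in one connected component and `r, s` in another.  For
a 4-taxon set `{p,q,r,s}` this says exactly that the (reduced unrooted) tree of
blobs of `H` displays the resolved quartet `pq|rs` (the edges of the tree of
blobs correspond exactly to the cut edges of the network, and suppressing
degree-2 nodes or contracting blobs does not affect which taxa a cut edge
separates). -/
def CutSep {X : Type} (H : Subgraph G) (leaf : X → G.V) (p q r s : X) : Prop :=
  ∃ e, H.IsCutEdge e ∧
    G.Conn (H.edges \ {e}) (leaf p) (leaf q) ∧
    G.Conn (H.edges \ {e}) (leaf r) (leaf s) ∧
    ¬ G.Conn (H.edges \ {e}) (leaf p) (leaf r)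

end MDigraph
open MDigraph in
/-- A rooted binary phylogenetic network on the taxon set `X`: a connected
directed acyclic graph whose node set consists of a root (in-degree 0,
out-degree 2), leaves (in-degree 1, out-degree 0) bijectively labelled by `X`,
tree nodes (in-degree 1, out-degree 2) and hybrid nodes (in-degree 2,
out-degree 1). -/
structure PhyloNetwork (X : Type) extends MDigraph where
  root : toMDigraph.V
  leaf : X → toMDigraph.V
  leaf_inj : Function.Injective leaf
  root_in : toMDigraph.inDeg root = 0
  root_out : toMDigraph.outDeg root = 2
  leaf_in : ∀ x, toMDigraph.inDeg (leaf x) = 1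
  leaf_out : ∀ x, toMDigraph.outDeg (leaf x) = 0
  internal : ∀ v, v ≠ root → (∀ x, v ≠ leaf x) →
      (toMDigraph.inDeg v = 1 ∧ toMDigraph.outDeg v = 2) ∨
      (toMDigraph.inDeg v = 2 ∧ toMDigraph.outDeg v = 1)
  acyclic : ∀ v, ¬ Relation.TransGen (toMDigraph.DStep Set.univ) v v
  conn : ∀ u v, toMDigraph.Conn Set.univ u v

namespace PhyloNetwork

open MDigraph

variable {X : Type} (N : PhyloNetwork X)

/-- The subnetwork of `N⁺` consisting of all nodes and edges ancestral to at
least one taxon in `Y`.  Since suppressing nodes of in- and out-degree 1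
affects neither blobs, nor cut edges, nor which sets of taxa they separate,
this subnetwork faithfully represents the induced network `N⁺_Y`. -/
def inducedSub (Y : Set X) : Subgraph N.toMDigraph where
  verts := {v | ∃ y ∈ Y, N.toMDigraph.Above v (N.leaf y)}
  edges := {e | ∃ y ∈ Y, N.toMDigraph.Above (N.toMDigraph.tgt e) (N.leaf y)}
  src_mem := by
    rintro e ⟨y, hy, h⟩
    exact ⟨y, hy, Relation.ReflTransGen.head ⟨e, Set.mem_univ e, rfl, rfl⟩ h⟩
  tgt_mem := by
    rintro e ⟨y, hy, h⟩
    exact ⟨y, hy, h⟩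

/-- `v` is a stable ancestor of the leaves: it is ancestral to every leaf and
lies on every directed path from the root to any leaf. -/
def IsStableAncestor (v : N.toMDigraph.V) : Prop :=
  (∀ x, N.toMDigraph.Above v (N.leaf x)) ∧
  ∀ x, N.toMDigraph.OnEveryPath v N.root (N.leaf x)

/-- `v` is the lowest stable ancestor (LSA) of the network: a stable ancestor
below all stable ancestors. -/
def IsLSA (v : N.toMDigraph.V) : Prop :=
  N.IsStableAncestor v ∧ ∀ u, N.IsStableAncestor u → N.toMDigraph.Above u v

/-- The number of cut edges of `N⁺` incident to the blob `B`. -/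
noncomputable def blobDeg (B : Subgraph N.toMDigraph) : ℕ :=
  Nat.card {e : N.toMDigraph.E // IncidentCut (top N.toMDigraph) B e}

/-- `B` is an `m`-blob of the rooted network `N⁺`: if the root is not in `B`
then `B` has exactly `m` incident cut edges, while if the root is in `B` then
`B` has exactly `m - 1` incident cut edges. -/
def IsMBlob (B : Subgraph N.toMDigraph) (m : ℕ) : Prop :=
  IsBlobIn (top N.toMDigraph) B ∧
    ((N.root ∈ B.verts ∧ m = N.blobDeg B + 1) ∨ (N.root ∉ B.verts ∧ m = N.blobDeg B))

end PhyloNetwork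

open MDigraph

/-!
Let `e` be a cut edge of `N⁺` separating `a, b` from `c, d`. Every taxon of `Y ⊇ {a,b,c,d}` is
reached from the root by a directed path inside the induced subnetwork `N⁺_Y`; cutting such a path
at `e` attaches the taxon, without using `e`, to the tail of `e` (which the root reaches without
`e`) or to its head. As `e` separates its endpoints in `N⁺`, two attached taxa are joined in
`N⁺_Y` minus `e` exactly when they are joined in `N⁺` minus `e`, so `e` still displays `ab|cd`.

A cut edge displaying `ab|cd` excludes a blob determined by `{a,b,c,d}`: the path from `a` to `b`
avoiding `e` must touch the blob, since the cut edges at the blob separate `a` from `b`; likewise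
for `c, d`; and the nodes of a blob stay connected once `e` is deleted.
-/

open Relation

theorem card_quot_lt_card_quot_iff {α : Type*} [Finite α] {r r' : α → α → Prop}
    (h : ∀ x y, r' x y → r x y) :
    Nat.card (Quot r) < Nat.card (Quot r') ↔
      ∃ x y, Quot.mk r x = Quot.mk r y ∧ Quot.mk r' x ≠ Quot.mk r' y := by
  let f : Quot r' → Quot r := Quot.map id h
  have hsurj : Function.Surjective f := Quot.ind fun x => ⟨Quot.mk r' x, rfl⟩
  have hle := Nat.card_le_card_of_surjective f hsurj
  constructor
  · intro hlt
    have hinj : ¬ Function.Injective f := fun hinj =>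
      hlt.ne ((Nat.bijective_iff_surjective_and_card f).mp ⟨hinj, hsurj⟩).2.symm
    simp only [Function.Injective, not_forall] at hinj
    obtain ⟨q, q', hqq', hne⟩ := hinj
    induction q using Quot.ind
    induction q' using Quot.ind
    exact ⟨_, _, hqq', hne⟩
  · rintro ⟨x, y, hxy, hne⟩
    refine hle.lt_of_ne fun heq => hne ?_
    exact ((Nat.bijective_iff_surjective_and_card f).mpr ⟨hsurj, heq.symm⟩).injective hxy

namespace MDigraph

variable {G : MDigraph}

theorem Step.symm {F : Set G.E} {u v : G.V} (h : G.Step F u v) : G.Step F v u := by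
  obtain ⟨e, he, hc⟩ := h
  exact ⟨e, he, hc.symm⟩

theorem Step.of_mem {F : Set G.E} {e : G.E} (he : e ∈ F) : G.Step F (G.src e) (G.tgt e) :=
  ⟨e, he, Or.inl ⟨rfl, rfl⟩⟩

instance (F : Set G.E) : Std.Symm (G.Step F) := ⟨fun _ _ => Step.symm⟩

theorem Conn.symm {F : Set G.E} {u v : G.V} (h : G.Conn F u v) : G.Conn F v u :=
  Std.Symm.symm (r := ReflTransGen (G.Step F)) u v h

theorem Conn.mono {F F' : Set G.E} (hF : F ⊆ F') {u v : G.V} (h : G.Conn F u v) :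
    G.Conn F' u v :=
  ReflTransGen.mono (fun _ _ ⟨e, he, hc⟩ => ⟨e, hF he, hc⟩) _ _ h

theorem DConn.conn {F : Set G.E} {u v : G.V} (h : G.DConn F u v) : G.Conn F u v :=
  ReflTransGen.mono (fun _ _ ⟨e, he, hs, ht⟩ => ⟨e, he, Or.inl ⟨hs, ht⟩⟩) _ _ h

theorem Conn.diff_singleton {F : Set G.E} {e : G.E}
    (hse : G.Conn (F \ {e}) (G.src e) (G.tgt e)) {u v : G.V} (h : G.Conn F u v) :
    G.Conn (F \ {e}) u v := by
  induction h with
  | refl => exact .refl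
  | tail _ hstep ih =>
    obtain ⟨f, hf, hc⟩ := hstep
    by_cases hfe : f = e
    · subst hfe
      rcases hc with ⟨rfl, rfl⟩ | ⟨rfl, rfl⟩
      · exact ih.trans hse
      · exact ih.trans hse.symm
    · exact ih.tail ⟨f, ⟨hf, hfe⟩, hc⟩

theorem Conn.of_superset {F K : Set G.E} (hFK : F ⊆ K) {u v x y : G.V}
    (huv : ¬ G.Conn K u v) (hx : G.Conn F u x ∨ G.Conn F v x)
    (hy : G.Conn F u y ∨ G.Conn F v y) (hxy : G.Conn K x y) : G.Conn F x y := by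
  rcases hx with hx | hx <;> rcases hy with hy | hy
  · exact hx.symm.trans hy
  · exact absurd (((hx.mono hFK).trans hxy).trans (hy.mono hFK).symm) huv
  · exact absurd (((hy.mono hFK).trans hxy.symm).trans (hx.mono hFK).symm) huv
  · exact hx.symm.trans hy

theorem exists_mem_conn_of_not_conn_inter {F F' : Set G.E} {W : Set G.V}
    (hW : ∀ f ∈ F, f ∉ F' → G.src f ∈ W ∨ G.tgt f ∈ W) {x y : G.V}
    (h : G.Conn F x y) (h' : ¬ G.Conn (F ∩ F') x y) : ∃ z ∈ W, G.Conn F x z := by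
  induction h with
  | refl => exact absurd .refl h'
  | @tail w y hxw hstep ih =>
    by_cases hxw' : G.Conn (F ∩ F') x w
    · obtain ⟨f, hf, hc⟩ := hstep
      have hf' : f ∉ F' := fun hf' => h' (hxw'.tail ⟨f, ⟨hf, hf'⟩, hc⟩)
      have hxy : G.Conn F x y := hxw.tail ⟨f, hf, hc⟩
      rcases hc with ⟨rfl, rfl⟩ | ⟨rfl, rfl⟩
      · exact (hW f hf hf').elim (fun hs => ⟨_, hs, hxw⟩) (fun ht => ⟨_, ht, hxy⟩)
      · exact (hW f hf hf').elim (fun hs => ⟨_, hs, hxy⟩) (fun ht => ⟨_, ht, hxw⟩)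
    · exact ih hxw'

theorem DConn.diff_singleton_or {F : Set G.E} {e : G.E} {u v : G.V} (h : G.DConn F u v) :
    G.DConn (F \ {e}) u v ∨
      (e ∈ F ∧ G.DConn (F \ {e}) u (G.src e) ∧ G.DConn (F \ {e}) (G.tgt e) v) := by
  induction h with
  | refl => exact .inl .refl
  | @tail w _ _ hstep ih =>
    obtain ⟨f, hf, rfl, rfl⟩ := hstep
    by_cases hfe : f = e
    · subst hfe
      exact .inr ⟨hf, ih.elim id (·.2.1), .refl⟩
    · have hstep' : G.DStep (F \ {e}) (G.src f) (G.tgt f) := ⟨f, ⟨hf, hfe⟩, rfl, rfl⟩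
      exact ih.imp (·.tail hstep') fun ⟨he, hu, hv⟩ => ⟨he, hu, hv.tail hstep'⟩

theorem DConn.diff_singleton_src {F : Set G.E} {e : G.E} {u : G.V}
    (h : G.DConn F u (G.src e)) : G.DConn (F \ {e}) u (G.src e) :=
  h.diff_singleton_or.elim id (·.2.1)

theorem Above.dConn {F : Set G.E} {u v : G.V} (h : G.Above u v)
    (hF : ∀ f, G.Above (G.tgt f) v → f ∈ F) : G.DConn F u v := by
  induction h using ReflTransGen.head_induction_on with
  | refl => exact .refl
  | head hstep htail ih =>
    obtain ⟨f, -, hs, ht⟩ := hstep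
    exact .head ⟨f, hF f (ht ▸ htail), hs, ht⟩ ih

namespace Subgraph

theorem mem_verts_of_conn {H : Subgraph G} {F : Set G.E} (hF : F ⊆ H.edges) {u v : G.V}
    (hu : u ∈ H.verts) (h : G.Conn F u v) : v ∈ H.verts := by
  induction h with
  | refl => exact hu
  | tail _ hstep ih =>
    obtain ⟨f, hf, ⟨rfl, rfl⟩ | ⟨rfl, rfl⟩⟩ := hstep
    · exact H.tgt_mem f (hF hf)
    · exact H.src_mem f (hF hf)

theorem numComponents_eq_card_quot (H : Subgraph G) :
    H.numComponents = Nat.card (Quot fun u v : H.verts => G.Step H.edges u v) := by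
  have hedges : {f ∈ H.edges | G.src f ∈ H.verts ∧ G.tgt f ∈ H.verts} = H.edges :=
    Set.sep_eq_self_iff_mem_true.mpr fun f hf => ⟨H.src_mem f hf, H.tgt_mem f hf⟩
  rw [numComponents, MDigraph.numComponents, hedges]

theorem quot_mk_eq_iff_conn (H : Subgraph G) {u v : H.verts} :
    Quot.mk (fun u v : H.verts => G.Step H.edges u v) u = Quot.mk _ v ↔
      G.Conn H.edges u v := by
  rw [Quot.eq]
  constructor
  · intro h
    induction h with
    | rel _ _ h => exact .single h
    | refl => exact .refl
    | symm _ _ _ ih => exact ih.symm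
    | trans _ _ _ _ _ ih ih' => exact ih.trans ih'
  · obtain ⟨u, hu⟩ := u
    obtain ⟨v, hv⟩ := v
    intro (h : G.Conn H.edges u v)
    induction h with
    | refl => exact .refl _
    | @tail w _ huw hstep ih =>
      have hw := H.mem_verts_of_conn subset_rfl hu huw
      exact .trans _ _ _ (ih hw) (.rel _ _ hstep)

theorem isCutEdge_iff {H : Subgraph G} {e : G.E} :
    H.IsCutEdge e ↔ e ∈ H.edges ∧ ∃ u ∈ H.verts, ∃ v ∈ H.verts,
      G.Conn H.edges u v ∧ ¬ G.Conn (H.edges \ {e}) u v := by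
  rw [IsCutEdge, numComponents_eq_card_quot, numComponents_eq_card_quot (H.deleteEdge e)]
  erw [card_quot_lt_card_quot_iff (fun _ _ ⟨f, hf, hc⟩ => ⟨f, hf.1, hc⟩)]
  constructor
  · rintro ⟨he, ⟨u, hu⟩, ⟨v, hv⟩, huv, hnot⟩
    exact ⟨he, u, hu, v, hv, (quot_mk_eq_iff_conn H).mp huv,
      fun h => hnot ((quot_mk_eq_iff_conn (H.deleteEdge e)).mpr h)⟩
  · rintro ⟨he, u, hu, v, hv, huv, hnot⟩
    exact ⟨he, ⟨u, hu⟩, ⟨v, hv⟩, (quot_mk_eq_iff_conn H).mpr huv,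
      fun h => hnot ((quot_mk_eq_iff_conn (H.deleteEdge e)).mp h)⟩

theorem IsCutEdge.not_conn_of_top {e : G.E} (h : (top G).IsCutEdge e) :
    ¬ G.Conn (Set.univ \ {e}) (G.src e) (G.tgt e) := by
  obtain ⟨-, u, -, v, -, huv, hnot⟩ := isCutEdge_iff.mp h
  exact fun hse => hnot (Conn.diff_singleton hse huv)

theorem IsConnected.conn_diff_singleton {B : Subgraph G} (hB : B.IsConnected)
    (hnc : ∀ f, ¬ B.IsCutEdge f) (e : G.E) {u v : G.V} (hu : u ∈ B.verts)
    (hv : v ∈ B.verts) : G.Conn (B.edges \ {e}) u v := by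
  by_cases he : e ∈ B.edges
  · by_contra hne
    exact hnc e (isCutEdge_iff.mpr ⟨he, u, hu, v, hv, hB.2 u hu v hv, hne⟩)
  · exact (hB.2 u hu v hv).mono (F' := B.edges \ {e}) fun f hf =>
      ⟨hf, fun hfe => he (hfe ▸ hf)⟩

end Subgraph

open Subgraph

theorem CutSep.not_bQuartetIn {X : Type} {H : Subgraph G} {leaf : X → G.V} {a b c d : X}
    (hq : CutSep H leaf a b c d) (hab : a ≠ b) (hcd : c ≠ d) :
    ¬ BQuartetIn H leaf a b c d := by
  rintro ⟨B, ⟨hBH, hB, hnc, -⟩, hdet⟩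
  obtain ⟨e, -, hab', hcd', hac⟩ := hq
  have touch : ∀ p ∈ ({a, b, c, d} : Set X), ∀ q ∈ ({a, b, c, d} : Set X), p ≠ q →
      G.Conn (H.edges \ {e}) (leaf p) (leaf q) →
      ∃ z ∈ B.verts, G.Conn (H.edges \ {e}) (leaf p) z := by
    intro p hp q hq hpq hpq'
    refine exists_mem_conn_of_not_conn_inter (F' := {f | ¬ IncidentCut H B f}) ?_ hpq' ?_
    · intro f _ hf
      rcases (not_not.mp hf).2 with ⟨hs, -⟩ | ⟨ht, -⟩
      · exact .inl hs
      · exact .inr ht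
    · exact fun h => hdet p hp q hq hpq
        (h.mono (F' := {f ∈ H.edges | ¬ IncidentCut H B f}) fun f hf => ⟨hf.1.1, hf.2⟩)
  obtain ⟨z, hz, haz⟩ := touch a (by simp) b (by simp) hab hab'
  obtain ⟨z', hz', hcz'⟩ := touch c (by simp) d (by simp) hcd hcd'
  have hzz' := (hB.conn_diff_singleton hnc e hz hz').mono (Set.sdiff_subset_sdiff_left hBH.2)
  exact hac ((haz.trans hzz').trans hcz'.symm)

theorem cutSep_of_conn_endpoints {X : Type} {H : Subgraph G} {leaf : X → G.V}
    {a b c d : X} {e : G.E} (he : e ∈ H.edges) (hcut : (top G).IsCutEdge e)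
    (hab : G.Conn (Set.univ \ {e}) (leaf a) (leaf b))
    (hcd : G.Conn (Set.univ \ {e}) (leaf c) (leaf d))
    (hac : ¬ G.Conn (Set.univ \ {e}) (leaf a) (leaf c))
    (hend : ∀ y ∈ ({a, b, c, d} : Set X),
      G.Conn (H.edges \ {e}) (G.src e) (leaf y) ∨ G.Conn (H.edges \ {e}) (G.tgt e) (leaf y)) :
    CutSep H leaf a b c d := by
  have hFK : H.edges \ {e} ⊆ Set.univ \ {e} := Set.sdiff_subset_sdiff_left (Set.subset_univ _)
  have restrict : ∀ p ∈ ({a, b, c, d} : Set X), ∀ q ∈ ({a, b, c, d} : Set X),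
      G.Conn (Set.univ \ {e}) (leaf p) (leaf q) → G.Conn (H.edges \ {e}) (leaf p) (leaf q) :=
    fun p hp q hq => Conn.of_superset hFK hcut.not_conn_of_top (hend p hp) (hend q hq)
  have hsrc : ∀ y ∈ ({a, b, c, d} : Set X), G.Conn H.edges (G.src e) (leaf y) := fun y hy =>
    (hend y hy).elim (·.mono Set.sdiff_subset)
      fun h => (ReflTransGen.single (Step.of_mem he)).trans (h.mono Set.sdiff_subset)
  have hac' : ¬ G.Conn (H.edges \ {e}) (leaf a) (leaf c) := fun h => hac (h.mono hFK)
  refine ⟨e, isCutEdge_iff.mpr ⟨he, leaf a, ?_, leaf c, ?_, ?_, hac'⟩,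
    restrict a (by simp) b (by simp) hab, restrict c (by simp) d (by simp) hcd, hac'⟩
  · exact H.mem_verts_of_conn subset_rfl (H.src_mem e he) (hsrc a (by simp))
  · exact H.mem_verts_of_conn subset_rfl (H.src_mem e he) (hsrc c (by simp))
  · exact (hsrc a (by simp)).symm.trans (hsrc c (by simp))

end MDigraph

namespace PhyloNetwork

variable {X : Type} (N : PhyloNetwork X)

theorem exists_tgt_eq_of_ne_root {v : N.V} (hv : v ≠ N.root) : ∃ f, N.tgt f = v := by
  by_contra! hno
  have h0 : N.inDeg v = 0 := by
    have : IsEmpty {f // N.tgt f = v} := ⟨fun f => hno f.1 f.2⟩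
    exact Nat.card_of_isEmpty
  by_cases hleaf : ∃ x, v = N.leaf x
  · obtain ⟨x, rfl⟩ := hleaf
    have := N.leaf_in x
    omega
  · rcases N.internal v hv (not_exists.mp hleaf) with ⟨h1, -⟩ | ⟨h1, -⟩ <;> omega

theorem root_above (v : N.V) : N.Above N.root v := by
  have : Std.Irrefl (TransGen (N.DStep Set.univ)) := ⟨N.acyclic⟩
  refine (Finite.wellFounded_of_trans_of_irrefl (TransGen (N.DStep Set.univ))).induction v
    fun v ih => ?_
  by_cases hv : v = N.root
  · exact hv ▸ .refl
  · obtain ⟨f, rfl⟩ := N.exists_tgt_eq_of_ne_root hv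
    have hstep : N.DStep Set.univ (N.src f) (N.tgt f) := ⟨f, trivial, rfl, rfl⟩
    exact (ih _ (.single hstep)).tail hstep

variable {N}

theorem leaf_mem_inducedSub {Y : Set X} {y : X} (hy : y ∈ Y) :
    N.leaf y ∈ (N.inducedSub Y).verts :=
  ⟨y, hy, .refl⟩

theorem dConn_root_inducedSub {Y : Set X} {v : N.V} (hv : v ∈ (N.inducedSub Y).verts) :
    N.DConn (N.inducedSub Y).edges N.root v := by
  obtain ⟨y, hy, hvy⟩ := hv
  exact (N.root_above v).dConn fun f hf => ⟨y, hy, hf.trans hvy⟩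

theorem mem_inducedSub_edges_of_not_conn {Y : Set X} {e : N.E} {a c : X} (ha : a ∈ Y)
    (hc : c ∈ Y) (hac : ¬ N.Conn (Set.univ \ {e}) (N.leaf a) (N.leaf c)) :
    e ∈ (N.inducedSub Y).edges := by
  by_contra he
  have hsub : (N.inducedSub Y).edges ⊆ Set.univ \ {e} := fun f hf =>
    ⟨trivial, fun hfe => he (hfe ▸ hf)⟩
  have hra := (dConn_root_inducedSub (leaf_mem_inducedSub ha)).conn.mono hsub
  have hrc := (dConn_root_inducedSub (leaf_mem_inducedSub hc)).conn.mono hsub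
  exact hac (hra.symm.trans hrc)

theorem conn_src_or_conn_tgt_inducedSub {Y : Set X} {e : N.E}
    (he : e ∈ (N.inducedSub Y).edges) {y : X} (hy : y ∈ Y) :
    N.Conn ((N.inducedSub Y).edges \ {e}) (N.src e) (N.leaf y) ∨
      N.Conn ((N.inducedSub Y).edges \ {e}) (N.tgt e) (N.leaf y) := by
  have hsrc := (dConn_root_inducedSub ((N.inducedSub Y).src_mem e he)).diff_singleton_src
  rcases (dConn_root_inducedSub (leaf_mem_inducedSub hy)).diff_singleton_or (e := e) with
    h | ⟨-, -, h⟩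
  · exact .inl (hsrc.conn.symm.trans h.conn)
  · exact .inr h.conn

theorem cutSep_inducedSub {Y : Set X} {a b c d : X} (hY : ({a, b, c, d} : Set X) ⊆ Y)
    (hq : CutSep (top N.toMDigraph) N.leaf a b c d) :
    CutSep (N.inducedSub Y) N.leaf a b c d := by
  obtain ⟨e, hcut, hab, hcd, hac⟩ := hq
  have he := mem_inducedSub_edges_of_not_conn (hY (by simp)) (hY (by simp)) hac
  exact cutSep_of_conn_endpoints he hcut hab hcd hac fun y hy =>
    conn_src_or_conn_tgt_inducedSub he (hY hy)

end PhyloNetwork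

theorem stmt_19_general {X : Type} (N : PhyloNetwork X) (a b c d : X)
    (hpair : List.Pairwise (· ≠ ·) [a, b, c, d])
    (hq : CutSep (top N.toMDigraph) N.leaf a b c d) :
    ¬ BQuartetIn (N.inducedSub {a, b, c, d}) N.leaf a b c d ∧
    CutSep (N.inducedSub {a, b, c, d}) N.leaf a b c d := by
  have hq' := N.cutSep_inducedSub subset_rfl hq
  have hab : a ≠ b := List.rel_of_pairwise_cons hpair (by simp)
  have hcd : c ≠ d := List.rel_of_pairwise_cons hpair.of_cons.of_cons (by simp)
  exact ⟨hq'.not_bQuartetIn hab hcd, hq'⟩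

/-- Let `N⁺` be a rooted binary phylogenetic network on taxon set `X` with
`|X| ≥ 4`, and let `{a,b,c,d} ⊆ X` be a T-quartet on `N⁺` whose associated
resolved quartet is `ab|cd` (i.e. the quartet displayed on `T_rd(N⁻)`: some
cut edge of the network separates `a, b` from `c, d`).  Then `{a,b,c,d}` is
also a T-quartet on the induced 4-taxon network `N⁺_{a,b,c,d}`, with the same
associated resolved quartet `ab|cd`. -/
theorem stmt_19 {X : Type} (N : PhyloNetwork X) (a b c d : X)
    (hpair : List.Pairwise (· ≠ ·) [a, b, c, d])
    (hT : ¬ BQuartetIn (top N.toMDigraph) N.leaf a b c d)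
    (hq : CutSep (top N.toMDigraph) N.leaf a b c d) :
    ¬ BQuartetIn (N.inducedSub {a, b, c, d}) N.leaf a b c d ∧
    CutSep (N.inducedSub {a, b, c, d}) N.leaf a b c d :=
  stmt_19_general N a b c d hpair hq
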